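/- arXiv:2104.14669 — 4 statements merged into one kernel-verified Lean document; each statement's English description precedes it below -/
import Mathlib

section
/- The relation R_S(p, x) defined by 'p represents x in signed digit representation' is the greatest relation R on streams of signed digits and reals satisfying R(d :: p, x) ↔ (x ∈ I_d ∧ R(p, 2x - d)); i.e., R_S satisfies this unfolding and contains every relation satisfying it. -/
/-- `p` is a stream of signed digits representing `x`. -/
def RS (p : ℕ → ℤ) (x : ℝ) : Prop :=
  (∀ i, p i = -1 ∨ p i = 0 ∨ p i = 1) ∧ x = ∑' i : ℕ, (p i : ℝ) / 2 ^ (i + 1)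

/-!
Dropping the leading digit of `∑ pᵢ 2^{-(i+1)}` doubles the value and subtracts `p₀`, which is the
unfolding of `RS`. Conversely, if `R` satisfies the unfolding and `R p x`, the remainders `xₙ`
reached after `n` unfoldings stay in `[-1, 1]`, and `x - ∑_{i<n} pᵢ 2^{-(i+1)} = xₙ / 2ⁿ`, so the
partial sums converge to `x`.
-/

open Filter Topology Finset

section DyadicSeries

variable {a : ℕ → ℝ} {C s x : ℝ}

lemma hasSum_const_div_two_pow_succ (C : ℝ) : HasSum (fun i : ℕ => C / 2 ^ (i + 1)) C := by
  simpa [pow_succ', div_div] using hasSum_geometric_two' C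

lemma norm_div_two_pow_succ_le (h : ∀ i, |a i| ≤ C) (i : ℕ) :
    ‖a i / 2 ^ (i + 1)‖ ≤ C / 2 ^ (i + 1) := by
  rw [Real.norm_eq_abs, abs_div, abs_pow, abs_two]
  exact div_le_div_of_nonneg_right (h i) (by positivity)

lemma summable_div_two_pow_succ (h : ∀ i, |a i| ≤ C) :
    Summable fun i => a i / 2 ^ (i + 1) :=
  (hasSum_const_div_two_pow_succ C).summable.of_norm_bounded (norm_div_two_pow_succ_le h)

lemma abs_le_of_hasSum_div_two_pow_succ (h : ∀ i, |a i| ≤ C)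
    (hs : HasSum (fun i => a i / 2 ^ (i + 1)) s) : |s| ≤ C :=
  hs.norm_le_of_bounded (hasSum_const_div_two_pow_succ C) (norm_div_two_pow_succ_le h)

lemma hasSum_div_two_pow_succ_iff_tail :
    HasSum (fun i => a i / 2 ^ (i + 1)) s ↔
      HasSum (fun i => a (i + 1) / 2 ^ (i + 1)) (2 * s - a 0) := by
  have hterm :
      (fun i => 2 * (a (i + 1) / 2 ^ (i + 1 + 1))) = fun i => a (i + 1) / 2 ^ (i + 1) := by
    funext i
    rw [pow_succ]
    field_simp
  have hsum : 2 * (s - ∑ i ∈ range 1, a i / 2 ^ (i + 1)) = 2 * s - a 0 := by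
    simp only [sum_range_one]
    ring
  rw [← hasSum_nat_add_iff' 1, ← hasSum_mul_left_iff two_ne_zero, hterm, hsum]

def doublingOrbit (a : ℕ → ℝ) (x : ℝ) : ℕ → ℝ
  | 0 => x
  | n + 1 => 2 * doublingOrbit a x n - a n

lemma sub_sum_range_eq_doublingOrbit_div (n : ℕ) :
    x - ∑ i ∈ range n, a i / 2 ^ (i + 1) = doublingOrbit a x n / 2 ^ n := by
  induction n with
  | zero => simp [doublingOrbit]
  | succ n ih =>
    rw [sum_range_succ, ← sub_sub, ih, doublingOrbit]
    field_simp
    ring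

lemma hasSum_of_abs_doublingOrbit_le (hb : ∀ n, |doublingOrbit a x n| ≤ C) :
    HasSum (fun i => a i / 2 ^ (i + 1)) x := by
  have ha : ∀ i, |a i| ≤ 3 * C := fun i => by
    have hai : a i = 2 * doublingOrbit a x i - doublingOrbit a x (i + 1) := by
      simp [doublingOrbit]
    rw [hai]
    calc |2 * doublingOrbit a x i - doublingOrbit a x (i + 1)|
        ≤ |2 * doublingOrbit a x i| + |doublingOrbit a x (i + 1)| := abs_sub _ _
      _ ≤ 3 * C := by rw [abs_mul, abs_two]; linarith [hb i, hb (i + 1)]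
  rw [(summable_div_two_pow_succ ha).hasSum_iff_tendsto_nat]
  have hrem : Tendsto (fun n => x - ∑ i ∈ range n, a i / 2 ^ (i + 1)) atTop (𝓝 0) := by
    simp_rw [sub_sum_range_eq_doublingOrbit_div]
    refine squeeze_zero_norm (fun n => ?_)
      (by simpa using (tendsto_pow_atTop_nhds_zero_of_lt_one (r := (1 / 2 : ℝ))
        (by norm_num) (by norm_num)).const_mul C)
    rw [Real.norm_eq_abs, abs_div, abs_pow, abs_two, ← div_eq_mul_inv]
    exact div_le_div_of_nonneg_right (hb n) (by positivity)
  simpa using hrem.const_sub x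

end DyadicSeries

lemma abs_le_one_of_signed_digit {d : ℤ} (hd : d = -1 ∨ d = 0 ∨ d = 1) : |(d : ℝ)| ≤ 1 := by
  rcases hd with rfl | rfl | rfl <;> norm_num

lemma RS_iff_hasSum {p : ℕ → ℤ} {x : ℝ} :
    RS p x ↔ (∀ i, p i = -1 ∨ p i = 0 ∨ p i = 1) ∧
      HasSum (fun i => (p i : ℝ) / 2 ^ (i + 1)) x := by
  refine and_congr_right fun hp => ?_
  rw [(summable_div_two_pow_succ fun i => abs_le_one_of_signed_digit (hp i)).hasSum_iff, eq_comm]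

lemma shift_doublingOrbit_of_unfolding (R : (ℕ → ℤ) → ℝ → Prop)
    (hR : ∀ p x, R p x → R (fun i => p (i + 1)) (2 * x - (p 0 : ℝ)))
    {p : ℕ → ℤ} {x : ℝ} (h : R p x) (n : ℕ) :
    R (fun i => p (i + n)) (doublingOrbit (fun i => (p i : ℝ)) x n) := by
  induction n with
  | zero => exact h
  | succ n ih => simpa [doublingOrbit, add_assoc, add_comm 1 n] using hR _ _ ih

theorem RS_greatest_fixpoint :
    (∀ (p : ℕ → ℤ) (x : ℝ), RS p x ↔
      ((∀ i, p i = -1 ∨ p i = 0 ∨ p i = 1) ∧ |2 * x - (p 0 : ℝ)| ≤ 1 ∧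
        RS (fun i => p (i + 1)) (2 * x - (p 0 : ℝ)))) ∧
    (∀ R : (ℕ → ℤ) → ℝ → Prop,
      (∀ p x, R p x → ∀ i, p i = -1 ∨ p i = 0 ∨ p i = 1) →
      (∀ p x, R p x → |2 * x - (p 0 : ℝ)| ≤ 1 ∧
        R (fun i => p (i + 1)) (2 * x - (p 0 : ℝ))) →
      ∀ p x, R p x → RS p x) := by
  refine ⟨fun p x => ?_, fun R hdig hstep p x hR => ?_⟩
  · rw [RS_iff_hasSum, RS_iff_hasSum, hasSum_div_two_pow_succ_iff_tail]
    constructor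
    · rintro ⟨hp, hs⟩
      have htail : ∀ i, p (i + 1) = -1 ∨ p (i + 1) = 0 ∨ p (i + 1) = 1 := fun i => hp (i + 1)
      exact ⟨hp, abs_le_of_hasSum_div_two_pow_succ
        (fun i => abs_le_one_of_signed_digit (htail i)) hs, htail, hs⟩
    · rintro ⟨hp, -, -, hs⟩
      exact ⟨hp, hs⟩
  · have horbit := shift_doublingOrbit_of_unfolding R (fun p x h => (hstep p x h).2) hR
    refine RS_iff_hasSum.2 ⟨hdig p x hR, hasSum_of_abs_doublingOrbit_le (C := max |x| 1) ?_⟩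
    rintro (_ | n)
    · exact le_max_left _ _
    · simpa [doublingOrbit] using le_max_of_le_right (hstep _ _ (horbit n)).1
end

section
/- The value represented by a total Gray code sequence is insensitive to a single digit flip at a position where the represented number's tent-map iterate is 0: if q and q' differ only at index k and t^k(x) = 0 where t(x) = 1 - 2|x| and x is represented by q, then q' also represents x; equivalently, Σ_{i}(-∏_{j≤i}(-q_j))2^{-(i+1)} = Σ_{i}(-∏_{j≤i}(-q'_j))2^{-(i+1)} when q_j = q'_j for all j ≠ k and the common tail after position k is R, L, L, L, ... . -/
/-!
Write `P = ∏_{j ≤ k} (-q_j)`. The tail `R, L, L, …` after position `k` makes every partial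
product from index `k + 1` on equal to `-P`, so the terms of index `≥ k + 1` form a geometric
series summing to `P / 2^(k+1)`, which cancels the term `-P / 2^(k+1)` of index `k`. Hence the
value is the partial sum over the indices `< k`, which does not involve the digit `q_k`.
-/

open Finset

noncomputable def grayTerm (q : ℕ → ℝ) (i : ℕ) : ℝ :=
  -(∏ j ∈ range (i + 1), -q j) / 2 ^ (i + 1)

noncomputable def grayValue (q : ℕ → ℝ) : ℝ :=
  ∑' i, grayTerm q i

lemma grayTerm_congr {q q' : ℕ → ℝ} {i : ℕ} (h : ∀ j ≤ i, q j = q' j) :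
    grayTerm q i = grayTerm q' i := by
  rw [grayTerm, grayTerm,
    prod_congr rfl fun j hj => by rw [h j (Nat.lt_succ_iff.mp (mem_range.mp hj))]]

section Tail

variable {q : ℕ → ℝ} {k : ℕ}

lemma prod_neg_range_of_tail (htail1 : q (k + 1) = 1) (htail2 : ∀ j, j > k + 1 → q j = -1)
    (i : ℕ) : ∏ j ∈ range (i + (k + 1) + 1), -q j = -∏ j ∈ range (k + 1), -q j := by
  induction i with
  | zero => rw [zero_add, prod_range_succ, htail1, mul_neg_one]
  | succ n ih =>
    rw [show n + 1 + (k + 1) + 1 = n + (k + 1) + 1 + 1 by ring, prod_range_succ, ih,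
      htail2 _ (by omega), neg_neg, mul_one]

lemma grayTerm_add_of_tail (htail1 : q (k + 1) = 1) (htail2 : ∀ j, j > k + 1 → q j = -1)
    (i : ℕ) :
    grayTerm q (i + (k + 1)) = (∏ j ∈ range (k + 1), -q j) / 2 ^ (k + 2) * (1 / 2) ^ i := by
  rw [grayTerm, prod_neg_range_of_tail htail1 htail2, neg_neg,
    show i + (k + 1) + 1 = i + (k + 2) by ring, pow_add, one_div, inv_pow]
  field_simp

lemma hasSum_grayTerm_add_of_tail (htail1 : q (k + 1) = 1)
    (htail2 : ∀ j, j > k + 1 → q j = -1) :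
    HasSum (fun i => grayTerm q (i + (k + 1))) (-grayTerm q k) := by
  have hgeom := hasSum_geometric_two.mul_left ((∏ j ∈ range (k + 1), -q j) / 2 ^ (k + 2))
  have hterm : -grayTerm q k = (∏ j ∈ range (k + 1), -q j) / 2 ^ (k + 2) * 2 := by
    rw [grayTerm, pow_succ _ (k + 1)]
    ring
  simpa only [grayTerm_add_of_tail htail1 htail2, hterm] using hgeom

theorem grayValue_eq_sum_range (htail1 : q (k + 1) = 1) (htail2 : ∀ j, j > k + 1 → q j = -1) :
    grayValue q = ∑ i ∈ range k, grayTerm q i := by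
  have htail := hasSum_grayTerm_add_of_tail htail1 htail2
  have hsum : Summable (grayTerm q) := (summable_nat_add_iff (k + 1)).mp htail.summable
  rw [grayValue, ← hsum.sum_add_tsum_nat_add (k + 1), htail.tsum_eq, sum_range_succ,
    add_neg_cancel_right]

end Tail

theorem gray_value_insensitive_flip_general (q q' : ℕ → ℝ) (k : ℕ)
    (hdiff : ∀ j, j ≠ k → q j = q' j)
    (htail1 : q (k + 1) = 1)
    (htail2 : ∀ j, j > k + 1 → q j = -1) :
    (∑' i : ℕ, (-(∏ j ∈ Finset.range (i + 1), (-(q j)))) / 2 ^ (i + 1)) =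
    (∑' i : ℕ, (-(∏ j ∈ Finset.range (i + 1), (-(q' j)))) / 2 ^ (i + 1)) := by
  have htail1' : q' (k + 1) = 1 := hdiff (k + 1) (by omega) ▸ htail1
  have htail2' : ∀ j, j > k + 1 → q' j = -1 := fun j hj => hdiff j (by omega) ▸ htail2 j hj
  change grayValue q = grayValue q'
  rw [grayValue_eq_sum_range htail1 htail2, grayValue_eq_sum_range htail1' htail2']
  refine sum_congr rfl fun i hi => grayTerm_congr fun j hj => hdiff j ?_
  have := mem_range.mp hi
  omega

theorem gray_value_insensitive_flip (q q' : ℕ → ℝ) (k : ℕ)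
    (hq : ∀ i, q i = -1 ∨ q i = 1) (hq' : ∀ i, q' i = -1 ∨ q' i = 1)
    (hdiff : ∀ j, j ≠ k → q j = q' j)
    (htail1 : q (k + 1) = 1)
    (htail2 : ∀ j, j > k + 1 → q j = -1) :
    (∑' i : ℕ, (-(∏ j ∈ Finset.range (i + 1), (-(q j)))) / 2 ^ (i + 1)) =
    (∑' i : ℕ, (-(∏ j ∈ Finset.range (i + 1), (-(q' j)))) / 2 ^ (i + 1)) :=
  gray_value_insensitive_flip_general q q' k hdiff htail1 htail2
end

section
/- Tail of Gray code computes the tent map: if q : ℕ → {-1,1} represents x ∈ [-1,1] via the Gray sum, then the shifted sequence (q_{i+1})_i represents t(x) = 1 - 2|x|. -/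
/-!
Write `G q = ∑ᵢ -(∏_{j ≤ i} -q j) / 2^(i+1)` for the Gray sum of `q`. Pulling the factor `-q 0`
out of every product after the first gives the recursion `G q = q 0 / 2 * (1 - G (q ∘ succ))`.
Since `|G| ≤ 1` for every `±1`-sequence, `1 - G (q ∘ succ) ≥ 0`, so `|G q| = (1 - G (q ∘ succ)) / 2`,
which is `t (G q) = G (q ∘ succ)`.
-/

open Finset

noncomputable section

namespace Gray

def term (q : ℕ → ℝ) (i : ℕ) : ℝ :=
  -(∏ j ∈ range (i + 1), -q j) / 2 ^ (i + 1)

def sum (q : ℕ → ℝ) : ℝ :=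
  ∑' i, term q i

theorem term_succ (q : ℕ → ℝ) (i : ℕ) :
    term q (i + 1) = -(q 0 / 2) * term (fun j => q (j + 1)) i := by
  simp only [term, prod_range_succ' (fun j => -q j) (i + 1), pow_succ]
  field_simp

variable {q : ℕ → ℝ}

theorem abs_term_le (hq : ∀ i, |q i| ≤ 1) (i : ℕ) : |term q i| ≤ 1 / 2 / 2 ^ i := by
  have hprod : |∏ j ∈ range (i + 1), -q j| ≤ 1 := by
    rw [abs_prod]
    exact prod_le_one (fun j _ => abs_nonneg _) (fun j _ => (abs_neg (q j)).trans_le (hq j))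
  calc |term q i| = |∏ j ∈ range (i + 1), -q j| / 2 ^ (i + 1) := by
        rw [term, abs_div, abs_neg, abs_of_pos (a := (2 : ℝ) ^ (i + 1)) (by positivity)]
    _ ≤ 1 / 2 ^ (i + 1) := by gcongr
    _ = 1 / 2 / 2 ^ i := by rw [pow_succ']; ring

theorem summable_term (hq : ∀ i, |q i| ≤ 1) : Summable (term q) :=
  (hasSum_geometric_two' 1).summable.of_norm_bounded (abs_term_le hq)

theorem abs_sum_le_one (hq : ∀ i, |q i| ≤ 1) : |sum q| ≤ 1 :=
  tsum_of_norm_bounded (f := term q) (hasSum_geometric_two' 1) (abs_term_le hq)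

theorem sum_eq_mul_one_sub_sum_tail (hq : ∀ i, |q i| ≤ 1) :
    sum q = q 0 / 2 * (1 - sum (fun j => q (j + 1))) := by
  rw [sum, (summable_term hq).tsum_eq_zero_add]
  simp only [term_succ, tsum_mul_left]
  simp only [term, zero_add, range_one, prod_singleton, neg_neg, pow_one, neg_mul, sum]
  ring

end Gray

end

theorem gray_tail_tent_general (q : ℕ → ℝ) (hq : ∀ i, q i = -1 ∨ q i = 1) (x : ℝ)
    (hx : x = ∑' i : ℕ, (-(∏ j ∈ Finset.range (i + 1), (-(q j)))) / 2 ^ (i + 1)) :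
    1 - 2 * |x| =
      ∑' i : ℕ, (-(∏ j ∈ Finset.range (i + 1), (-(q (j + 1))))) / 2 ^ (i + 1) := by
  have habs : ∀ i, |q i| = 1 := fun i => by rcases hq i with h | h <;> simp [h]
  subst hx
  change 1 - 2 * |Gray.sum q| = Gray.sum fun j => q (j + 1)
  set y := Gray.sum fun j => q (j + 1)
  have hy : 0 ≤ 1 - y := by linarith [le_abs_self y, Gray.abs_sum_le_one fun i => (habs (i + 1)).le]
  rw [Gray.sum_eq_mul_one_sub_sum_tail fun i => (habs i).le, abs_mul, abs_div, habs 0,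
    abs_of_nonneg hy]
  ring

theorem gray_tail_tent (q : ℕ → ℝ) (hq : ∀ i, q i = -1 ∨ q i = 1) (x : ℝ)
    (h1 : -1 ≤ x) (h2 : x ≤ 1)
    (hx : x = ∑' i : ℕ, (-(∏ j ∈ Finset.range (i + 1), (-(q j)))) / 2 ^ (i + 1)) :
    1 - 2 * |x| =
      ∑' i : ℕ, (-(∏ j ∈ Finset.range (i + 1), (-(q (j + 1))))) / 2 ^ (i + 1) :=
  gray_tail_tent_general q hq x hx
end

section
/- Characterization of signed digit representations of 0: a stream p : ℕ → {-1,0,1} represents 0 (i.e. Σ p_i 2^{-(i+1)} = 0) if and only if p is of one of the forms 0^ω, 0^k (-1) 1^ω, or 0^k 1 (-1)^ω for some k ≥ 0. -/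
/-!
Splitting off the leading zeros and the first nonzero digit `p k = ±1` gives
`Σ p_i 2^{-(i+1)} = 2^{-(k+1)} (p k + t)`, where `t` is the value of the tail after position `k`.
So the value vanishes iff `t = ∓1`. Since every digit is at most `1` in absolute value and
`Σ 2^{-(i+1)} = 1`, the extreme values `±1` are attained only by the constant tails `(±1)^ω`.
-/

noncomputable def signedDigitValue (p : ℕ → ℤ) : ℝ :=
  ∑' i : ℕ, (p i : ℝ) / 2 ^ (i + 1)

section

variable {p : ℕ → ℤ}

theorem summable_signedDigit_terms (hb : ∀ i, |p i| ≤ 1) :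
    Summable fun i : ℕ => (p i : ℝ) / 2 ^ (i + 1) := by
  refine (summable_geometric_two' 1).of_norm_bounded fun i => ?_
  have hpi : |(p i : ℝ)| ≤ 1 := by exact_mod_cast hb i
  rw [Real.norm_eq_abs, abs_div, abs_of_pos (by positivity : (0 : ℝ) < 2 ^ (i + 1)), pow_succ',
    ← div_div]
  gcongr

theorem signedDigitValue_const (c : ℤ) : signedDigitValue (fun _ => c) = c := by
  simp only [signedDigitValue, pow_succ', ← div_div]
  exact tsum_geometric_two' c

theorem signedDigitValue_neg : signedDigitValue (fun i => -p i) = -signedDigitValue p := by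
  simp only [signedDigitValue, Int.cast_neg, neg_div, tsum_neg]

theorem signedDigitValue_eq_one_iff (hb : ∀ i, |p i| ≤ 1) :
    signedDigitValue p = 1 ↔ ∀ i, p i = 1 := by
  refine ⟨fun h => ?_, fun h => by simpa [funext h] using signedDigitValue_const 1⟩
  by_contra! ⟨j, hj⟩
  have hlt : signedDigitValue p < signedDigitValue (fun _ => 1) := by
    refine Summable.tsum_lt_tsum (i := j) (fun i => ?_) ?_ (summable_signedDigit_terms hb)
      (summable_signedDigit_terms (by simp))
    · gcongr
      exact_mod_cast (abs_le.1 (hb i)).2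
    · gcongr
      exact_mod_cast lt_of_le_of_ne (abs_le.1 (hb j)).2 hj
  rw [h, signedDigitValue_const] at hlt
  norm_num at hlt

theorem signedDigitValue_eq_neg_one_iff (hb : ∀ i, |p i| ≤ 1) :
    signedDigitValue p = -1 ↔ ∀ i, p i = -1 := by
  have hb' : ∀ i, |-p i| ≤ 1 := by simpa only [abs_neg] using hb
  rw [← neg_inj, ← signedDigitValue_neg, neg_neg, signedDigitValue_eq_one_iff hb']
  simp only [neg_eq_iff_eq_neg]

theorem signedDigitValue_eq_of_forall_lt_eq_zero (hb : ∀ i, |p i| ≤ 1) {k : ℕ}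
    (hzero : ∀ i < k, p i = 0) :
    signedDigitValue p = (p k + signedDigitValue fun i => p (i + (k + 1))) / 2 ^ (k + 1) := by
  have hhead : ∑ i ∈ Finset.range (k + 1), (p i : ℝ) / 2 ^ (i + 1) = p k / 2 ^ (k + 1) := by
    rw [Finset.sum_range_succ, Finset.sum_eq_zero fun i hi => by
      simp [hzero i (Finset.mem_range.1 hi)], zero_add]
  have htail : ∑' i : ℕ, (p (i + (k + 1)) : ℝ) / 2 ^ (i + (k + 1) + 1) =
      (signedDigitValue fun i => p (i + (k + 1))) / 2 ^ (k + 1) := by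
    rw [signedDigitValue, ← tsum_div_const]
    congr 1 with i
    rw [div_div, ← pow_add]
    ring_nf
  rw [signedDigitValue, ← (summable_signedDigit_terms hb).sum_add_tsum_nat_add (k + 1), hhead,
    htail, add_div]

theorem signedDigitValue_eq_zero_iff_of_forall_lt_eq_zero (hb : ∀ i, |p i| ≤ 1) {k : ℕ}
    (hzero : ∀ i < k, p i = 0) :
    signedDigitValue p = 0 ↔ (signedDigitValue fun i => p (i + (k + 1))) = -p k := by
  rw [signedDigitValue_eq_of_forall_lt_eq_zero hb hzero, div_eq_zero_iff, eq_neg_iff_add_eq_zero,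
    add_comm]
  simp

end

theorem Nat.forall_gt_iff_forall_add_succ {P : ℕ → Prop} {k : ℕ} :
    (∀ i, i > k → P i) ↔ ∀ i, P (i + (k + 1)) :=
  ⟨fun h i => h _ (by omega),
    fun h i hi => by simpa [Nat.sub_add_cancel hi] using h (i - (k + 1))⟩

theorem sd_representations_of_zero (p : ℕ → ℤ)
    (hp : ∀ i, p i = -1 ∨ p i = 0 ∨ p i = 1) :
    (∑' i : ℕ, (p i : ℝ) / 2 ^ (i + 1)) = 0 ↔
      ((∀ i, p i = 0) ∨
       (∃ k : ℕ, (∀ i, i < k → p i = 0) ∧ p k = -1 ∧ ∀ i, i > k → p i = 1) ∨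
       (∃ k : ℕ, (∀ i, i < k → p i = 0) ∧ p k = 1 ∧ ∀ i, i > k → p i = -1)) := by
  have hb : ∀ i, |p i| ≤ 1 := fun i => by rcases hp i with h | h | h <;> simp [h]
  have hbtail : ∀ k i, |p (i + (k + 1))| ≤ 1 := fun _ _ => hb _
  change signedDigitValue p = 0 ↔ _
  constructor
  · intro h0
    by_cases hzero : ∀ i, p i = 0
    · exact Or.inl hzero
    push Not at hzero
    let k := Nat.find hzero
    have hlt : ∀ i < k, p i = 0 := fun i hi => not_not.1 (Nat.find_min hzero hi)
    have htail := (signedDigitValue_eq_zero_iff_of_forall_lt_eq_zero hb hlt).1 h0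
    rcases hp k with hk | hk | hk
    · rw [hk, Int.cast_neg, Int.cast_one, neg_neg, signedDigitValue_eq_one_iff (hbtail k)]
        at htail
      exact Or.inr (Or.inl ⟨k, hlt, hk, Nat.forall_gt_iff_forall_add_succ.2 htail⟩)
    · exact absurd hk (Nat.find_spec hzero)
    · rw [hk, Int.cast_one, signedDigitValue_eq_neg_one_iff (hbtail k)] at htail
      exact Or.inr (Or.inr ⟨k, hlt, hk, Nat.forall_gt_iff_forall_add_succ.2 htail⟩)
  · rintro (hzero | ⟨k, hlt, hk, hgt⟩ | ⟨k, hlt, hk, hgt⟩)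
    · simp [signedDigitValue, hzero]
    · rw [signedDigitValue_eq_zero_iff_of_forall_lt_eq_zero hb hlt, hk,
        signedDigitValue_eq_one_iff (hbtail k) |>.2 (Nat.forall_gt_iff_forall_add_succ.1 hgt)]
      norm_num
    · rw [signedDigitValue_eq_zero_iff_of_forall_lt_eq_zero hb hlt, hk,
        signedDigitValue_eq_neg_one_iff (hbtail k) |>.2 (Nat.forall_gt_iff_forall_add_succ.1 hgt)]
      norm_num
end
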